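/- Boundedness of the total bacterial concentration: Let n ≥ 1 and let S, I, R, W : [0,∞) → ℝ^n be differentiable functions solving the cholera metapopulation system for all t ≥ 0, with W_i(t) ≥ 0 and I_i(t) ≥ 0 for all t ≥ 0 and all i. Suppose there is a constant K ≥ 0 such that Σ_{i=1}^n ζ_i I_i(t) ≤ K for all t ≥ 0. Let d_min^C = min_{i=1,…,n} d_i^C (which is positive) and let T_B(t) = Σ_{i=1}^n W_i(t). Then for all t ≥ 0, T_B(t) ≤ max( T_B(0), K / d_min^C ). -/

import Mathlib

/-!
The total concentration `T = ∑ W i` satisfies `T' ≤ K - d_min^C T`: movement conserves mass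
because the columns of `M^W` sum to zero, shedding contributes at most `K`, and decay removes
at least `d_min^C T` since `W ≥ 0`. A function with `f' ≤ K - c f`, `c > 0`, cannot cross any
level `M + e` with `M = max (f 0) (K / c)` and `e > 0`, since there `f' ≤ -c e < 0`.
-/

open Finset Set

theorem Matrix.sum_sum_mul_eq_zero_of_sum_col_eq_zero {ι R : Type*} [Fintype ι]
    [NonUnitalNonAssocSemiring R] {M : Matrix ι ι R} (hM : ∀ j, ∑ i, M i j = 0) (x : ι → R) :
    ∑ i, ∑ j, M i j * x j = 0 := by
  rw [sum_comm]
  simp only [← sum_mul, hM, zero_mul, sum_const_zero]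

theorem sum_sub_mul_add_sum_mul_le {ι : Type*} [Fintype ι] {M : Matrix ι ι ℝ}
    (hM : ∀ j, ∑ i, M i j = 0) {c : ℝ} {d w : ι → ℝ} (hc : ∀ i, c ≤ d i) (hw : ∀ i, 0 ≤ w i)
    (s : ι → ℝ) :
    ∑ i, (s i - d i * w i + ∑ j, M i j * w j) ≤ ∑ i, s i - c * ∑ i, w i := by
  have hdecay : c * ∑ i, w i ≤ ∑ i, d i * w i := by
    rw [mul_sum]
    exact sum_le_sum fun i _ => mul_le_mul_of_nonneg_right (hc i) (hw i)
  rw [sum_add_distrib, sum_sub_distrib, M.sum_sum_mul_eq_zero_of_sum_col_eq_zero hM]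
  linarith

theorem le_max_div_of_hasDerivWithinAt_le_sub_mul {f f' : ℝ → ℝ} {a c K : ℝ} (hc : 0 < c)
    (hf : ∀ x, a ≤ x → HasDerivWithinAt f (f' x) (Ici a) x)
    (hf' : ∀ x, a ≤ x → f' x ≤ K - c * f x) {x : ℝ} (hx : a ≤ x) :
    f x ≤ max (f a) (K / c) := by
  set M := max (f a) (K / c)
  have hKM : K ≤ c * M := (div_le_iff₀' hc).1 (le_max_right _ _)
  refine le_of_forall_pos_le_add fun e he => ?_
  refine image_le_of_deriv_right_lt_deriv_boundary (B := fun _ => M + e) (B' := 0)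
    (fun y hy => (hf y hy.1).continuousWithinAt.mono Icc_subset_Ici_self)
    (fun y hy => (hf y hy.1).mono (Ici_subset_Ici.2 hy.1))
    (by linarith [le_max_left (f a) (K / c)]) (fun _ => hasDerivAt_const _ _)
    (fun y hy hfy => ?_) ⟨hx, le_rfl⟩
  have hdecrease := hf' y hy.1
  rw [hfy] at hdecrease
  simp only [Pi.zero_apply]
  linarith [mul_pos hc he]

theorem cholera_total_bacterial_concentration_bounded_general
    (n : ℕ)
    (ζ dC : Fin n → ℝ)
    (hdC : ∀ i, 0 < dC i)
    (MW : Matrix (Fin n) (Fin n) ℝ)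
    (hMWcol : ∀ j, ∑ i, MW i j = 0)
    (I W : ℝ → Fin n → ℝ)
    (hW : ∀ t, 0 ≤ t → ∀ i, HasDerivWithinAt (fun τ => W τ i)
      (ζ i * I t i - dC i * W t i + ∑ j, MW i j * W t j) (Set.Ici (0:ℝ)) t)
    (hWnn : ∀ t, 0 ≤ t → ∀ i, 0 ≤ W t i)
    (K : ℝ) (hKbound : ∀ t, 0 ≤ t → ∑ i, ζ i * I t i ≤ K)
    (dCmin : ℝ) (hdCmin_le : ∀ i, dCmin ≤ dC i) (hdCmin_mem : ∃ i, dC i = dCmin) :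
    ∀ t, 0 ≤ t → ∑ i, W t i ≤ max (∑ i, W 0 i) (K / dCmin) := by
  have hdCmin_pos : 0 < dCmin := by
    obtain ⟨i, rfl⟩ := hdCmin_mem
    exact hdC i
  refine fun t ht => le_max_div_of_hasDerivWithinAt_le_sub_mul hdCmin_pos
    (fun s hs => HasDerivWithinAt.fun_sum fun i _ => hW s hs i) (fun s hs => ?_) ht
  calc _ ≤ ∑ i, ζ i * I s i - dCmin * ∑ i, W s i :=
        sum_sub_mul_add_sum_mul_le hMWcol hdCmin_le (hWnn s hs) _
    _ ≤ K - dCmin * ∑ i, W s i := by linarith [hKbound s hs]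

/-- Boundedness of the total bacterial concentration in the cholera
metapopulation model. -/
theorem cholera_total_bacterial_concentration_bounded
    (n : ℕ) (hn : 1 ≤ n)
    (b dH v ε γ δ ζ dC βI βW : Fin n → ℝ)
    (hb : ∀ i, 0 ≤ b i) (hdH : ∀ i, 0 < dH i) (hv : ∀ i, 0 ≤ v i)
    (hε : ∀ i, 0 ≤ ε i) (hγ : ∀ i, 0 ≤ γ i) (hδ : ∀ i, 0 ≤ δ i)
    (hζ : ∀ i, 0 ≤ ζ i) (hdC : ∀ i, 0 < dC i)
    (hβI : ∀ i, 0 ≤ βI i) (hβW : ∀ i, 0 ≤ βW i)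
    (MS MI MR MW : Matrix (Fin n) (Fin n) ℝ)
    (hMSoff : ∀ i j, i ≠ j → 0 ≤ MS i j) (hMScol : ∀ j, ∑ i, MS i j = 0)
    (hMIoff : ∀ i j, i ≠ j → 0 ≤ MI i j) (hMIcol : ∀ j, ∑ i, MI i j = 0)
    (hMRoff : ∀ i j, i ≠ j → 0 ≤ MR i j) (hMRcol : ∀ j, ∑ i, MR i j = 0)
    (hMWoff : ∀ i j, i ≠ j → 0 ≤ MW i j) (hMWcol : ∀ j, ∑ i, MW i j = 0)
    (S I R W : ℝ → Fin n → ℝ)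
    (hS : ∀ t, 0 ≤ t → ∀ i, HasDerivWithinAt (fun τ => S τ i)
      (b i + ε i * R t i - (βI i * I t i + βW i * W t i) * S t i
        - (v i + dH i) * S t i + ∑ j, MS i j * S t j) (Set.Ici (0:ℝ)) t)
    (hI : ∀ t, 0 ≤ t → ∀ i, HasDerivWithinAt (fun τ => I τ i)
      ((βI i * I t i + βW i * W t i) * S t i - (γ i + δ i + dH i) * I t i
        + ∑ j, MI i j * I t j) (Set.Ici (0:ℝ)) t)
    (hR : ∀ t, 0 ≤ t → ∀ i, HasDerivWithinAt (fun τ => R τ i)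
      (γ i * I t i + v i * S t i - (ε i + dH i) * R t i
        + ∑ j, MR i j * R t j) (Set.Ici (0:ℝ)) t)
    (hW : ∀ t, 0 ≤ t → ∀ i, HasDerivWithinAt (fun τ => W τ i)
      (ζ i * I t i - dC i * W t i + ∑ j, MW i j * W t j) (Set.Ici (0:ℝ)) t)
    (hWnn : ∀ t, 0 ≤ t → ∀ i, 0 ≤ W t i)
    (hInn : ∀ t, 0 ≤ t → ∀ i, 0 ≤ I t i)
    (K : ℝ) (hK : 0 ≤ K) (hKbound : ∀ t, 0 ≤ t → ∑ i, ζ i * I t i ≤ K)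
    (dCmin : ℝ) (hdCmin_le : ∀ i, dCmin ≤ dC i) (hdCmin_mem : ∃ i, dC i = dCmin) :
    ∀ t, 0 ≤ t → ∑ i, W t i ≤ max (∑ i, W 0 i) (K / dCmin) :=
  cholera_total_bacterial_concentration_bounded_general n ζ dC hdC MW hMWcol I W hW hWnn K hKbound
    dCmin hdCmin_le hdCmin_mem
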